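/- arXiv:1010.4344 — 5 statements merged into one kernel-verified Lean document; each statement's English description precedes it below -/
import Mathlib

section
/- Let μ be the Heisenberg bracket on ℝ³ given by μ(e₁,e₂) = e₃. The set 𝔞 = {diag(a,b,a+b) : a,b ∈ ℝ} is a 2-dimensional linear subspace of pairwise-commuting symmetric derivations of μ, and every linear subspace of symmetric derivations of μ whose elements pairwise commute has dimension at most 2. -/
open Matrix

/-- The Heisenberg bracket on ℝ³ given by μ(e₁,e₂) = e₃ (bilinear extension). -/
def heis3 (x y : Fin 3 → ℝ) : Fin 3 → ℝ := ![0, 0, x 0 * y 1 - x 1 * y 0]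

/-- `D` is a derivation of the bracket `heis3`. -/
def IsDerivation3 (D : Matrix (Fin 3) (Fin 3) ℝ) : Prop :=
  ∀ x y : Fin 3 → ℝ, D.mulVec (heis3 x y) = heis3 (D.mulVec x) y + heis3 x (D.mulVec y)

/-- The set 𝔞 = {diag(a,b,a+b) : a,b ∈ ℝ}. -/
def frakA : Set (Matrix (Fin 3) (Fin 3) ℝ) :=
  {D | ∃ a b : ℝ, D = Matrix.diagonal ![a, b, a + b]}

noncomputable def fA : (Fin 2 → ℝ) →ₗ[ℝ] Matrix (Fin 3) (Fin 3) ℝ where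
  toFun v := Matrix.diagonal ![v 0, v 1, v 0 + v 1]
  map_add' u v := by
    ext i j
    fin_cases i <;> fin_cases j <;> simp [Matrix.diagonal] <;> ring
  map_smul' c v := by
    ext i j
    fin_cases i <;> fin_cases j <;> simp [Matrix.diagonal] <;> ring

noncomputable def gW : (Fin 3 → ℝ) →ₗ[ℝ] Matrix (Fin 3) (Fin 3) ℝ where
  toFun v := !![v 0, v 2, 0; v 2, v 1, 0; 0, 0, v 0 + v 1]
  map_add' u v := by
    ext i j
    fin_cases i <;> fin_cases j <;> simp <;> ring
  map_smul' c v := by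
    ext i j
    fin_cases i <;> fin_cases j <;> simp <;> ring

lemma deriv3_entries (D : Matrix (Fin 3) (Fin 3) ℝ) (hD : IsDerivation3 D) :
    D 0 2 = 0 ∧ D 1 2 = 0 ∧ D 2 2 = D 0 0 + D 1 1 := by
  have h1 := congrFun (hD ![1,0,0] ![0,1,0]) 0
  have h2 := congrFun (hD ![1,0,0] ![0,1,0]) 1
  have h3 := congrFun (hD ![1,0,0] ![0,1,0]) 2
  simp [heis3, Matrix.mulVec, dotProduct, Fin.sum_univ_three] at h1 h2 h3
  exact ⟨h1, h2, by linarith⟩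

lemma gW_inj : Function.Injective gW := by
  rw [injective_iff_map_eq_zero]
  intro v h
  have h0 := congrFun (congrFun h 0) 0
  have h1 := congrFun (congrFun h 1) 1
  have h2 := congrFun (congrFun h 0) 1
  simp [gW] at h0 h1 h2
  ext i
  fin_cases i <;> simpa

lemma fA_inj : Function.Injective fA := by
  rw [injective_iff_map_eq_zero]
  intro v h
  have h0 := congrFun (congrFun h 0) 0
  have h1 := congrFun (congrFun h 1) 1
  simp [fA, Matrix.diagonal] at h0 h1
  ext i
  fin_cases i <;> simpa

theorem stmt2 :
    (∀ D ∈ frakA, D.IsSymm ∧ IsDerivation3 D) ∧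
    (∀ D ∈ frakA, ∀ E ∈ frakA, D * E = E * D) ∧
    (∃ A : Submodule ℝ (Matrix (Fin 3) (Fin 3) ℝ),
        (A : Set (Matrix (Fin 3) (Fin 3) ℝ)) = frakA ∧ Module.finrank ℝ A = 2) ∧
    (∀ V : Submodule ℝ (Matrix (Fin 3) (Fin 3) ℝ),
        (∀ D ∈ V, D.IsSymm ∧ IsDerivation3 D) →
        (∀ D ∈ V, ∀ E ∈ V, D * E = E * D) →
        Module.finrank ℝ V ≤ 2) := by
  refine ⟨?_, ?_, ?_, ?_⟩
  · rintro D ⟨a, b, rfl⟩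
    refine ⟨Matrix.isSymm_diagonal _, ?_⟩
    intro x y
    ext i
    fin_cases i <;>
      simp [heis3, Matrix.mulVec, dotProduct, Fin.sum_univ_three, Matrix.diagonal] <;>
      ring
  · rintro D ⟨a, b, rfl⟩ E ⟨c, d, rfl⟩
    rw [Matrix.diagonal_mul_diagonal, Matrix.diagonal_mul_diagonal]
    ext i j
    fin_cases i <;> fin_cases j <;> simp [Matrix.diagonal] <;> ring
  · refine ⟨LinearMap.range fA, ?_, ?_⟩
    · ext M
      simp only [SetLike.mem_coe, LinearMap.mem_range, frakA, Set.mem_setOf_eq]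
      constructor
      · rintro ⟨v, rfl⟩
        exact ⟨v 0, v 1, rfl⟩
      · rintro ⟨a, b, rfl⟩
        refine ⟨![a, b], ?_⟩
        simp [fA]
    · rw [LinearMap.finrank_range_of_inj fA_inj]
      simp
  · intro V hsd hcomm
    have hVW : V ≤ LinearMap.range gW := by
      intro D hD
      obtain ⟨hs, hder⟩ := hsd D hD
      obtain ⟨e1, e2, e3⟩ := deriv3_entries D hder
      have hsym : ∀ i j, D i j = D j i := fun i j => by
        have := congrFun (congrFun hs j) i
        simpa [Matrix.transpose_apply] using this
      refine ⟨![D 0 0, D 1 1, D 0 1], ?_⟩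
      ext i j
      fin_cases i <;> fin_cases j <;>
        simp [gW] <;>
        first
          | rfl
          | simp [e1, e2, e3, hsym 1 0, hsym 2 0, hsym 2 1]
    have hW3 : Module.finrank ℝ (LinearMap.range gW) = 3 := by
      rw [LinearMap.finrank_range_of_inj gW_inj]
      simp
    by_contra hle
    push_neg at hle
    have hVle : Module.finrank ℝ V ≤ Module.finrank ℝ (LinearMap.range gW) :=
      Submodule.finrank_mono hVW
    have hV3 : Module.finrank ℝ V = 3 := le_antisymm (by omega) hle
    have hVW' : V = LinearMap.range gW :=
      Submodule.eq_of_le_of_finrank_le hVW (by omega)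
    have hX : gW ![1,0,0] ∈ V := hVW' ▸ LinearMap.mem_range_self _ _
    have hY : gW ![0,0,1] ∈ V := hVW' ▸ LinearMap.mem_range_self _ _
    have := congrFun (congrFun (hcomm _ hX _ hY) 0) 1
    simp [gW, Matrix.mul_apply, Fin.sum_univ_three] at this
end

section
/- Let μ be the bracket on ℝ⁴ given by μ(e₁,e₂) = e₃ and μ(e₁,e₃) = e₄. A symmetric 4×4 real matrix D is a derivation of μ if and only if D = diag(a, b, a+b, 2a+b) for some real numbers a, b. In particular all symmetric derivations of μ are diagonal and pairwise commute. -/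
open Matrix

/-- The bracket on ℝ⁴ given by μ(e₁,e₂) = e₃, μ(e₁,e₃) = e₄ (bilinear extension);
this is the filiform nilsoliton η₁ = (0,0,12,13). -/
def eta1 (x y : Fin 4 → ℝ) : Fin 4 → ℝ :=
  ![0, 0, x 0 * y 1 - x 1 * y 0, x 0 * y 2 - x 2 * y 0]

/-- `D` is a derivation of the bracket `eta1`. -/
def IsDerivEta1 (D : Matrix (Fin 4) (Fin 4) ℝ) : Prop :=
  ∀ x y : Fin 4 → ℝ, D.mulVec (eta1 x y) = eta1 (D.mulVec x) y + eta1 x (D.mulVec y)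

lemma key (D : Matrix (Fin 4) (Fin 4) ℝ) (hs : D.IsSymm) (hd : IsDerivEta1 D) :
    D = Matrix.diagonal ![D 0 0, D 1 1, D 0 0 + D 1 1, 2 * D 0 0 + D 1 1] := by
  have hsym : ∀ i j, D j i = D i j := fun i j => by
    have := congrFun (congrFun hs j) i; simpa [Matrix.transpose_apply] using this.symm
  have h12 := hd ![1,0,0,0] ![0,1,0,0]
  have h13 := hd ![1,0,0,0] ![0,0,1,0]
  have h23 := hd ![0,1,0,0] ![0,0,1,0]
  have e12_0 := congrFun h12 0
  have e12_1 := congrFun h12 1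
  have e12_2 := congrFun h12 2
  have e12_3 := congrFun h12 3
  have e13_0 := congrFun h13 0
  have e13_1 := congrFun h13 1
  have e13_2 := congrFun h13 2
  have e13_3 := congrFun h13 3
  have e23_3 := congrFun h23 3
  simp [eta1, Matrix.mulVec, dotProduct, Fin.sum_univ_four] at e12_0 e12_1 e12_2 e12_3 e13_0 e13_1 e13_2 e13_3 e23_3
  ext i j
  fin_cases i <;> fin_cases j <;> simp [Matrix.diagonal] <;>
    linarith [hsym 0 1, hsym 0 2, hsym 0 3, hsym 1 2, hsym 1 3, hsym 2 3,
      e12_0, e12_1, e12_2, e12_3, e13_0, e13_1, e13_2, e13_3, e23_3]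

lemma deriv_of_diag (a b : ℝ) :
    IsDerivEta1 (Matrix.diagonal ![a, b, a + b, 2 * a + b]) := by
  intro x y
  funext i
  fin_cases i <;>
    simp [eta1, Matrix.mulVec_diagonal, Matrix.mulVec, dotProduct,
      Fin.sum_univ_four, Matrix.diagonal] <;> ring

theorem stmt4 :
    (∀ D : Matrix (Fin 4) (Fin 4) ℝ, D.IsSymm →
      (IsDerivEta1 D ↔ ∃ a b : ℝ, D = Matrix.diagonal ![a, b, a + b, 2 * a + b])) ∧
    (∀ D : Matrix (Fin 4) (Fin 4) ℝ, D.IsSymm → IsDerivEta1 D → D.IsDiag) ∧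
    (∀ D E : Matrix (Fin 4) (Fin 4) ℝ, D.IsSymm → IsDerivEta1 D →
      E.IsSymm → IsDerivEta1 E → D * E = E * D) := by
  refine ⟨fun D hs => ⟨fun hd => ⟨D 0 0, D 1 1, key D hs hd⟩,
    fun ⟨a, b, hD⟩ => hD ▸ deriv_of_diag a b⟩, fun D hs hd => ?_, fun D E hsD hdD hsE hdE => ?_⟩
  · rw [key D hs hd]; exact Matrix.isDiag_diagonal _
  · rw [key D hsD hdD, key E hsE hdE, Matrix.diagonal_mul_diagonal,
      Matrix.diagonal_mul_diagonal]
    exact congrArg _ (funext fun i => mul_comm _ _)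
end

section
/- Let μ be the 5-dimensional Heisenberg bracket on ℝ⁵ given by μ(e₁,e₂) = e₅ and μ(e₃,e₄) = e₅. A symmetric 5×5 real matrix D is a derivation of μ if and only if there exist real numbers a, b, c, α, β, u, v such that D = [[a,α,u,v,0],[α,b,v,−u,0],[u,v,c,β,0],[v,−u,β,a+b−c,0],[0,0,0,0,a+b]]. -/
open Matrix

/-- The 5-dimensional Heisenberg bracket on ℝ⁵ given by μ(e₁,e₂) = e₅, μ(e₃,e₄) = e₅
(bilinear extension); this is the nilsoliton λ₄ = (0,0,0,0,12+34). -/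
def lam4 (x y : Fin 5 → ℝ) : Fin 5 → ℝ :=
  ![0, 0, 0, 0, (x 0 * y 1 - x 1 * y 0) + (x 2 * y 3 - x 3 * y 2)]

/-- `D` is a derivation of the bracket `lam4`. -/
def IsDerivLam4 (D : Matrix (Fin 5) (Fin 5) ℝ) : Prop :=
  ∀ x y : Fin 5 → ℝ, D.mulVec (lam4 x y) = lam4 (D.mulVec x) y + lam4 x (D.mulVec y)

theorem stmt6 (D : Matrix (Fin 5) (Fin 5) ℝ) (hD : D.IsSymm) :
    IsDerivLam4 D ↔ ∃ a b c α β u v : ℝ,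
      D = !![a, α, u, v, 0;
             α, b, v, -u, 0;
             u, v, c, β, 0;
             v, -u, β, a + b - c, 0;
             0, 0, 0, 0, a + b] := by
  constructor
  · intro h
    have h01 := h ![1,0,0,0,0] ![0,1,0,0,0]
    have h23 := h ![0,0,1,0,0] ![0,0,0,1,0]
    have h02 := h ![1,0,0,0,0] ![0,0,1,0,0]
    have h03 := h ![1,0,0,0,0] ![0,0,0,1,0]
    have h12 := h ![0,1,0,0,0] ![0,0,1,0,0]
    have h13 := h ![0,1,0,0,0] ![0,0,0,1,0]
    simp [lam4, mulVec, dotProduct, Fin.sum_univ_five, funext_iff,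
      Fin.forall_fin_succ, show (Fin.succ 2 : Fin 5) = 3 from rfl,
      show ((Fin.succ 2).succ : Fin 5) = 4 from rfl] at h01 h23 h02 h03 h12 h13
    obtain ⟨e04, e14, e24, e34, e44⟩ := h01
    obtain ⟨-, -, -, -, e44'⟩ := h23
    have hs : ∀ i j : Fin 5, D j i = D i j := fun i j => (hD.apply j i).symm
    refine ⟨D 0 0, D 1 1, D 2 2, D 0 1, D 2 3, D 0 2, D 0 3, ?_⟩
    ext i j
    fin_cases i <;> fin_cases j <;> simp <;>
      linarith [hs 0 1, hs 0 2, hs 0 3, hs 1 2, hs 1 3, hs 2 3,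
        hs 0 4, hs 1 4, hs 2 4, hs 3 4, e04, e14, e24, e34, e44, e44',
        h02, h03, h12, h13]
  · rintro ⟨a, b, c, α, β, u, v, rfl⟩
    intro x y
    funext k
    fin_cases k <;>
      simp [lam4, mulVec, dotProduct, Fin.sum_univ_five] <;> ring
end

section
/- Let μ be the bracket on ℝ⁶ given by μ(e₁,e₂) = 2e₃, μ(e₁,e₃) = √5·e₄, μ(e₂,e₃) = √5·e₅, μ(e₁,e₄) = 2e₆, μ(e₂,e₅) = −2e₆. Then a symmetric 6×6 real matrix D is a derivation of μ if and only if there exist real a, b such that D = diag([[a,b],[b,a]], 2a, [[3a,b],[b,3a]], 4a) in block form (blocks acting on span(e₁,e₂), span(e₃), span(e₄,e₅), span(e₆)). Moreover any two matrices of this form commute, so the symmetric derivations of μ form a 2-dimensional abelian Lie algebra. -/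
open Matrix

section ConsValLits
variable {α : Type*}
@[simp] private lemma cl2_1 (x:α)(u:Fin 1→α): Matrix.vecCons x u 1 = u 0 := rfl
@[simp] private lemma cl3_1 (x:α)(u:Fin 2→α): Matrix.vecCons x u 1 = u 0 := rfl
@[simp] private lemma cl3_2 (x:α)(u:Fin 2→α): Matrix.vecCons x u 2 = u 1 := rfl
@[simp] private lemma cl4_1 (x:α)(u:Fin 3→α): Matrix.vecCons x u 1 = u 0 := rfl
@[simp] private lemma cl4_2 (x:α)(u:Fin 3→α): Matrix.vecCons x u 2 = u 1 := rfl
@[simp] private lemma cl4_3 (x:α)(u:Fin 3→α): Matrix.vecCons x u 3 = u 2 := rfl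
@[simp] private lemma cl5_1 (x:α)(u:Fin 4→α): Matrix.vecCons x u 1 = u 0 := rfl
@[simp] private lemma cl5_2 (x:α)(u:Fin 4→α): Matrix.vecCons x u 2 = u 1 := rfl
@[simp] private lemma cl5_3 (x:α)(u:Fin 4→α): Matrix.vecCons x u 3 = u 2 := rfl
@[simp] private lemma cl5_4 (x:α)(u:Fin 4→α): Matrix.vecCons x u 4 = u 3 := rfl
@[simp] private lemma cl6_1 (x:α)(u:Fin 5→α): Matrix.vecCons x u 1 = u 0 := rfl
@[simp] private lemma cl6_2 (x:α)(u:Fin 5→α): Matrix.vecCons x u 2 = u 1 := rfl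
@[simp] private lemma cl6_3 (x:α)(u:Fin 5→α): Matrix.vecCons x u 3 = u 2 := rfl
@[simp] private lemma cl6_4 (x:α)(u:Fin 5→α): Matrix.vecCons x u 4 = u 3 := rfl
@[simp] private lemma cl6_5 (x:α)(u:Fin 5→α): Matrix.vecCons x u 5 = u 4 := rfl
@[simp] private lemma sl1_0 : (Fin.succ 0 : Fin 2) = 1 := rfl
@[simp] private lemma sl2_0 : (Fin.succ 0 : Fin 3) = 1 := rfl
@[simp] private lemma sl2_1 : (Fin.succ 1 : Fin 3) = 2 := rfl
@[simp] private lemma sl3_0 : (Fin.succ 0 : Fin 4) = 1 := rfl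
@[simp] private lemma sl3_1 : (Fin.succ 1 : Fin 4) = 2 := rfl
@[simp] private lemma sl3_2 : (Fin.succ 2 : Fin 4) = 3 := rfl
@[simp] private lemma sl4_0 : (Fin.succ 0 : Fin 5) = 1 := rfl
@[simp] private lemma sl4_1 : (Fin.succ 1 : Fin 5) = 2 := rfl
@[simp] private lemma sl4_2 : (Fin.succ 2 : Fin 5) = 3 := rfl
@[simp] private lemma sl4_3 : (Fin.succ 3 : Fin 5) = 4 := rfl
@[simp] private lemma sl5_0 : (Fin.succ 0 : Fin 6) = 1 := rfl
@[simp] private lemma sl5_1 : (Fin.succ 1 : Fin 6) = 2 := rfl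
@[simp] private lemma sl5_2 : (Fin.succ 2 : Fin 6) = 3 := rfl
@[simp] private lemma sl5_3 : (Fin.succ 3 : Fin 6) = 4 := rfl
@[simp] private lemma sl5_4 : (Fin.succ 4 : Fin 6) = 5 := rfl
@[simp] private lemma fm0 (h : 0 < 6) : (⟨0, h⟩ : Fin 6) = 0 := rfl
@[simp] private lemma fm1 (h : 1 < 6) : (⟨1, h⟩ : Fin 6) = 1 := rfl
@[simp] private lemma fm2 (h : 2 < 6) : (⟨2, h⟩ : Fin 6) = 2 := rfl
@[simp] private lemma fm3 (h : 3 < 6) : (⟨3, h⟩ : Fin 6) = 3 := rfl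
@[simp] private lemma fm4 (h : 4 < 6) : (⟨4, h⟩ : Fin 6) = 4 := rfl
@[simp] private lemma fm5 (h : 5 < 6) : (⟨5, h⟩ : Fin 6) = 5 := rfl
end ConsValLits

set_option maxHeartbeats 2000000

/-- The bracket on ℝ⁶ given by μ(e₁,e₂) = 2e₃, μ(e₁,e₃) = √5·e₄, μ(e₂,e₃) = √5·e₅,
μ(e₁,e₄) = 2e₆, μ(e₂,e₅) = −2e₆ (bilinear extension); this is the nilsoliton
μ₇ = (0,0,2·12,√5·13,√5·23,2·14−2·25). -/
noncomputable def mu7 (x y : Fin 6 → ℝ) : Fin 6 → ℝ :=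
  ![0, 0, 2 * (x 0 * y 1 - x 1 * y 0),
    Real.sqrt 5 * (x 0 * y 2 - x 2 * y 0),
    Real.sqrt 5 * (x 1 * y 2 - x 2 * y 1),
    2 * (x 0 * y 3 - x 3 * y 0) - 2 * (x 1 * y 4 - x 4 * y 1)]

/-- `D` is a derivation of the bracket `mu7`. -/
def IsDerivMu7 (D : Matrix (Fin 6) (Fin 6) ℝ) : Prop :=
  ∀ x y : Fin 6 → ℝ, D.mulVec (mu7 x y) = mu7 (D.mulVec x) y + mu7 x (D.mulVec y)

/-- The set of block matrices diag([[a,b],[b,a]], 2a, [[3a,b],[b,3a]], 4a). -/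
def S7 : Set (Matrix (Fin 6) (Fin 6) ℝ) :=
  {D | ∃ a b : ℝ,
    D = !![a, b, 0, 0, 0, 0;
           b, a, 0, 0, 0, 0;
           0, 0, 2 * a, 0, 0, 0;
           0, 0, 0, 3 * a, b, 0;
           0, 0, 0, b, 3 * a, 0;
           0, 0, 0, 0, 0, 4 * a]}

private def M7 (a b : ℝ) : Matrix (Fin 6) (Fin 6) ℝ :=
  !![a, b, 0, 0, 0, 0;
     b, a, 0, 0, 0, 0;
     0, 0, 2 * a, 0, 0, 0;
     0, 0, 0, 3 * a, b, 0;
     0, 0, 0, b, 3 * a, 0;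
     0, 0, 0, 0, 0, 4 * a]

private lemma mem_S7_iff (D : Matrix (Fin 6) (Fin 6) ℝ) :
    D ∈ S7 ↔ ∃ a b : ℝ, D = M7 a b := Iff.rfl

private lemma M7_isDeriv (a b : ℝ) : IsDerivMu7 (M7 a b) := by
  intro x y
  funext k
  fin_cases k <;>
    simp only [mu7, M7, Matrix.mulVec, dotProduct, Fin.sum_univ_succ, Fin.sum_univ_zero,
    fm0, fm1, fm2, fm3, fm4, fm5, Matrix.cons_val_zero, Matrix.of_apply, cl2_1, cl3_1, cl3_2, cl4_1, cl4_2, cl4_3,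
    cl5_1, cl5_2, cl5_3, cl5_4, cl6_1, cl6_2, cl6_3, cl6_4, cl6_5,
    sl1_0, sl2_0, sl2_1, sl3_0, sl3_1, sl3_2, sl4_0, sl4_1, sl4_2, sl4_3,
    sl5_0, sl5_1, sl5_2, sl5_3, sl5_4,
    mul_zero, zero_mul, mul_one, one_mul, add_zero, zero_add, sub_zero, zero_sub,
    neg_zero, mul_neg, neg_neg, Pi.add_apply] <;>
    ring

private lemma M7_comm (a b c d : ℝ) : M7 a b * M7 c d = M7 c d * M7 a b := by
  ext i j
  fin_cases i <;> fin_cases j <;>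
    simp [M7, Matrix.mul_apply, Fin.sum_univ_succ] <;> ring

private lemma M7_comb (a b : ℝ) : a • M7 1 0 + b • M7 0 1 = M7 a b := by
  ext i j
  fin_cases i <;> fin_cases j <;>
    simp [M7, Matrix.vecHead, Matrix.vecTail] <;> ring

private lemma M7_li : LinearIndependent ℝ ![M7 1 0, M7 0 1] := by
  rw [linearIndependent_fin2]
  refine ⟨fun h => ?_, fun a h => ?_⟩
  · have := congrFun (congrFun h 0) 1
    simp [M7] at this
  · have := congrFun (congrFun h 0) 0
    simp [M7] at this

private lemma deriv_mem_S7 (D : Matrix (Fin 6) (Fin 6) ℝ) (hs : D.IsSymm)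
    (hD : IsDerivMu7 D) : D ∈ S7 := by
  have s5 : Real.sqrt 5 ≠ 0 := by positivity
  have hsym : ∀ i j : Fin 6, D j i = D i j := fun i j => hs.apply i j
  have E : ∀ (x y : Fin 6 → ℝ) (k : Fin 6),
      D.mulVec (mu7 x y) k = mu7 (D.mulVec x) y k + mu7 x (D.mulVec y) k :=
    fun x y k => congrFun (hD x y) k
  have h01_0 := E ![1,0,0,0,0,0] ![0,1,0,0,0,0] 0
  have h01_1 := E ![1,0,0,0,0,0] ![0,1,0,0,0,0] 1
  have h01_2 := E ![1,0,0,0,0,0] ![0,1,0,0,0,0] 2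
  have h01_3 := E ![1,0,0,0,0,0] ![0,1,0,0,0,0] 3
  have h01_4 := E ![1,0,0,0,0,0] ![0,1,0,0,0,0] 4
  have h01_5 := E ![1,0,0,0,0,0] ![0,1,0,0,0,0] 5
  have h02_0 := E ![1,0,0,0,0,0] ![0,0,1,0,0,0] 0
  have h02_1 := E ![1,0,0,0,0,0] ![0,0,1,0,0,0] 1
  have h02_3 := E ![1,0,0,0,0,0] ![0,0,1,0,0,0] 3
  have h02_4 := E ![1,0,0,0,0,0] ![0,0,1,0,0,0] 4
  have h12_0 := E ![0,1,0,0,0,0] ![0,0,1,0,0,0] 0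
  have h12_4 := E ![0,1,0,0,0,0] ![0,0,1,0,0,0] 4
  have h03_0 := E ![1,0,0,0,0,0] ![0,0,0,1,0,0] 0
  have h03_1 := E ![1,0,0,0,0,0] ![0,0,0,1,0,0] 1
  have h03_4 := E ![1,0,0,0,0,0] ![0,0,0,1,0,0] 4
  have h03_5 := E ![1,0,0,0,0,0] ![0,0,0,1,0,0] 5
  have h14_5 := E ![0,1,0,0,0,0] ![0,0,0,0,1,0] 5
  have h04_2 := E ![1,0,0,0,0,0] ![0,0,0,0,1,0] 2
  have h05_5 := E ![1,0,0,0,0,0] ![0,0,0,0,0,1] 5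
  simp only [mu7, M7, Matrix.mulVec, dotProduct, Fin.sum_univ_succ, Fin.sum_univ_zero,
    fm0, fm1, fm2, fm3, fm4, fm5, Matrix.cons_val_zero, Matrix.of_apply, cl2_1, cl3_1, cl3_2, cl4_1, cl4_2, cl4_3,
    cl5_1, cl5_2, cl5_3, cl5_4, cl6_1, cl6_2, cl6_3, cl6_4, cl6_5,
    sl1_0, sl2_0, sl2_1, sl3_0, sl3_1, sl3_2, sl4_0, sl4_1, sl4_2, sl4_3,
    sl5_0, sl5_1, sl5_2, sl5_3, sl5_4,
    mul_zero, zero_mul, mul_one, one_mul, add_zero, zero_add, sub_zero, zero_sub,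
    neg_zero, mul_neg, neg_neg] at h01_0 h01_1 h01_2 h01_3 h01_4 h01_5 h02_0 h02_1 h02_3 h02_4 h12_0 h12_4 h03_0 h03_1 h03_4 h03_5 h14_5 h04_2 h05_5
  -- zero entries
  have z02 : D 0 2 = 0 := by linarith
  have z12 : D 1 2 = 0 := by linarith
  have z03 : D 0 3 = 0 := mul_right_cancel₀ s5 (by linarith : D 0 3 * Real.sqrt 5 = 0 * Real.sqrt 5)
  have z13 : D 1 3 = 0 := mul_right_cancel₀ s5 (by linarith : D 1 3 * Real.sqrt 5 = 0 * Real.sqrt 5)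
  have z04 : D 0 4 = 0 := mul_right_cancel₀ s5 (by linarith : D 0 4 * Real.sqrt 5 = 0 * Real.sqrt 5)
  have z14 : D 1 4 = 0 := by linarith
  have z05 : D 0 5 = 0 := by linarith
  have z15 : D 1 5 = 0 := by linarith
  have z45 : D 4 5 = 0 := by linarith
  have z35 : D 3 5 = 0 := by linarith
  have z32 : D 3 2 = 0 := by
    have e12 : D 2 1 = 0 := (hsym 1 2).trans z12
    rw [e12, mul_zero] at h01_3; linarith
  have z42 : D 4 2 = 0 := by
    have e02 : D 2 0 = 0 := (hsym 0 2).trans z02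
    rw [e02, mul_zero] at h01_4; linarith
  have z52 : D 5 2 = 0 := by
    have e04 : D 4 0 = 0 := (hsym 0 4).trans z04
    have e13 : D 3 1 = 0 := (hsym 1 3).trans z13
    rw [e04, e13] at h01_5; linarith
  have e43 : D 4 3 = D 0 1 := by
    have e10 : D 1 0 = D 0 1 := hsym 0 1
    rw [e10] at h02_4
    exact mul_right_cancel₀ s5 (by linarith : D 4 3 * Real.sqrt 5 = D 0 1 * Real.sqrt 5)
  -- diagonal
  have g33 : D 3 3 = D 0 0 + D 2 2 :=
    mul_right_cancel₀ s5 (by linarith : D 3 3 * Real.sqrt 5 = (D 0 0 + D 2 2) * Real.sqrt 5)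
  have g44 : D 4 4 = D 1 1 + D 2 2 :=
    mul_right_cancel₀ s5 (by linarith : D 4 4 * Real.sqrt 5 = (D 1 1 + D 2 2) * Real.sqrt 5)
  have d11 : D 1 1 = D 0 0 := by linarith
  have d22 : D 2 2 = 2 * D 0 0 := by linarith
  have d33 : D 3 3 = 3 * D 0 0 := by linarith
  have d44 : D 4 4 = 3 * D 0 0 := by linarith
  have d55 : D 5 5 = 4 * D 0 0 := by linarith
  refine ⟨D 0 0, D 0 1, ?_⟩
  ext i j
  fin_cases i <;> fin_cases j <;>
    simp only [fm0, fm1, fm2, fm3, fm4, fm5, fm0, fm1, fm2, fm3, fm4, fm5, Matrix.cons_val_zero, Matrix.of_apply, cl2_1, cl3_1, cl3_2, cl4_1, cl4_2, cl4_3,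
      cl5_1, cl5_2, cl5_3, cl5_4, cl6_1, cl6_2, cl6_3, cl6_4, cl6_5] <;>
    linarith [z02, z12, z03, z13, z04, z14, z05, z15, z45, z35, z32, z42, z52, e43,
      d11, d22, d33, d44, d55, hsym 0 1, hsym 0 2, hsym 0 3, hsym 0 4, hsym 0 5, hsym 1 2, hsym 1 3, hsym 1 4, hsym 1 5, hsym 2 3, hsym 2 4, hsym 2 5, hsym 3 4, hsym 3 5, hsym 4 5]

theorem stmt11 :
    (∀ D : Matrix (Fin 6) (Fin 6) ℝ, D.IsSymm → (IsDerivMu7 D ↔ D ∈ S7)) ∧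
    (∀ D ∈ S7, ∀ E ∈ S7, D * E = E * D) ∧
    (∃ A : Submodule ℝ (Matrix (Fin 6) (Fin 6) ℝ),
        (A : Set (Matrix (Fin 6) (Fin 6) ℝ)) = S7 ∧ Module.finrank ℝ A = 2) := by
  refine ⟨fun D hsymm => ⟨fun hD => deriv_mem_S7 D hsymm hD, ?_⟩, ?_, ?_⟩
  · rintro ⟨a, b, rfl⟩
    exact M7_isDeriv a b
  · rintro D ⟨a, b, rfl⟩ E ⟨c, d, rfl⟩
    exact M7_comm a b c d
  · refine ⟨Submodule.span ℝ {M7 1 0, M7 0 1}, ?_, ?_⟩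
    · ext D
      simp only [SetLike.mem_coe, Submodule.mem_span_pair, mem_S7_iff]
      constructor
      · rintro ⟨a, b, rfl⟩
        exact ⟨a, b, M7_comb a b⟩
      · rintro ⟨a, b, rfl⟩
        exact ⟨a, b, M7_comb a b⟩
    · have hr : ({M7 1 0, M7 0 1} : Set (Matrix (Fin 6) (Fin 6) ℝ))
          = Set.range ![M7 1 0, M7 0 1] := by
        ext x
        simp [Fin.exists_fin_two, eq_comm]
        tauto
      rw [hr, finrank_span_eq_card M7_li]
      simp
end

section
/- Let V and V′ be linear subspaces of the space of diagonal n×n real matrices. Then there exists an orthogonal matrix g ∈ O(n) with gVg⁻¹ = V′ if and only if there exists a permutation matrix P with PVP⁻¹ = V′. -/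
/-!
An orthogonal `g` with `g A g⁻¹ = A'` for diagonal `A`, `A'` satisfies `g A = A' g`, and comparing
entries gives `A' i i = A j j` whenever `g i j ≠ 0`. Since `det g ≠ 0`, some term of the Leibniz
expansion of `det g` is nonzero, i.e. there is a permutation `σ` with `g (σ i) i ≠ 0` for all `i`.
This `σ` depends only on `g`, and conjugating by its permutation matrix does to every `A ∈ V`
what `g` does.
-/

open Matrix

namespace Matrix

variable {n R : Type*} [Fintype n] [DecidableEq n]

lemma exists_perm_forall_apply_ne_zero_of_det_ne_zero [CommRing R] {M : Matrix n n R}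
    (hM : M.det ≠ 0) : ∃ σ : Equiv.Perm n, ∀ i, M (σ i) i ≠ 0 := by
  by_contra! h
  refine hM ((det_apply M).trans (Finset.sum_eq_zero fun σ _ => ?_))
  obtain ⟨i, hi⟩ := h σ
  exact smul_eq_zero_of_right _ (Finset.prod_eq_zero (Finset.mem_univ i) hi)

lemma IsDiag.apply_eq_of_mul_eq_mul [CommRing R] [NoZeroDivisors R] {A B g : Matrix n n R}
    (hA : A.IsDiag) (hB : B.IsDiag) (h : g * A = B * g) {i j : n} (hg : g i j ≠ 0) :
    B i i = A j j := by
  rw [← hA.diagonal_diag, ← hB.diagonal_diag] at h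
  have hij := congrFun (congrFun h i) j
  rw [mul_diagonal, diagonal_mul, mul_comm (g i j)] at hij
  exact (mul_right_cancel₀ hg hij).symm

lemma IsDiag.eq_submatrix_of_mul_eq_mul [CommRing R] [NoZeroDivisors R] {A B g : Matrix n n R}
    (hA : A.IsDiag) (hB : B.IsDiag) (h : g * A = B * g) {σ : Equiv.Perm n}
    (hσ : ∀ i, g (σ i) i ≠ 0) : B = A.submatrix σ.symm σ.symm := by
  ext i j
  rcases eq_or_ne i j with rfl | hij
  · exact hA.apply_eq_of_mul_eq_mul hB h (by simpa using hσ (σ.symm i))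
  · rw [hB hij, submatrix_apply, hA (σ.symm.injective.ne hij)]

lemma permMatrix_mul_transpose_self [NonAssocSemiring R] (σ : Equiv.Perm n) :
    σ.permMatrix R * (σ.permMatrix R)ᵀ = 1 := by
  rw [transpose_permMatrix, ← permMatrix_mul, inv_mul_cancel, permMatrix_one]

lemma permMatrix_mul_mul_inv_permMatrix [CommRing R] (σ : Equiv.Perm n) (A : Matrix n n R) :
    σ.permMatrix R * A * (σ.permMatrix R)⁻¹ = A.submatrix σ σ := by
  rw [inv_eq_right_inv (permMatrix_mul_transpose_self σ), transpose_permMatrix,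
    PEquiv.toMatrix_toPEquiv_mul, PEquiv.mul_toMatrix_toPEquiv]
  rfl

end Matrix

theorem stmt19 (n : ℕ) (V V' : Submodule ℝ (Matrix (Fin n) (Fin n) ℝ))
    (hV : ∀ A ∈ V, A.IsDiag) (hV' : ∀ A ∈ V', A.IsDiag) :
    (∃ g : Matrix (Fin n) (Fin n) ℝ, g * gᵀ = 1 ∧
        (fun A => g * A * g⁻¹) '' (V : Set (Matrix (Fin n) (Fin n) ℝ)) =
          (V' : Set (Matrix (Fin n) (Fin n) ℝ))) ↔
    (∃ σ : Equiv.Perm (Fin n),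
        (fun A => σ.permMatrix ℝ * A * (σ.permMatrix ℝ)⁻¹) ''
            (V : Set (Matrix (Fin n) (Fin n) ℝ)) =
          (V' : Set (Matrix (Fin n) (Fin n) ℝ))) := by
  constructor
  · rintro ⟨g, hg, hgV⟩
    obtain ⟨σ, hσ⟩ := exists_perm_forall_apply_ne_zero_of_det_ne_zero
      (det_ne_zero_of_right_inverse hg)
    refine ⟨σ⁻¹, ?_⟩
    rw [← hgV]
    refine Set.image_congr fun A hA => ?_
    have hA' : g * A * g⁻¹ ∈ V' := by
      rw [← SetLike.mem_coe, ← hgV]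
      exact Set.mem_image_of_mem _ hA
    have hconj : g * A = g * A * g⁻¹ * g := by
      rw [inv_eq_right_inv hg, Matrix.mul_assoc _ gᵀ, mul_eq_one_comm.mp hg,
        Matrix.mul_one]
    rw [permMatrix_mul_mul_inv_permMatrix, Equiv.Perm.inv_def]
    exact ((hV A hA).eq_submatrix_of_mul_eq_mul (hV' _ hA') hconj hσ).symm
  · rintro ⟨σ, hσ⟩
    exact ⟨σ.permMatrix ℝ, permMatrix_mul_transpose_self σ, hσ⟩
end
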